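/- arXiv:0801.3986 — 2 statements merged into one kernel-verified Lean document; each statement's English description precedes it below -/
import Mathlib

section
/- Let n and d be positive integers with d ≤ n. Then P[n,d−1] ≤ max{ Σ_{j=0}^{i} L_{i,j} : i = ⌊(d−1)/2⌋, ⌊(d−1)/2⌋+1, …, d−1 }. -/
open Finset

/-- Hamming distance between two permutations of `{0,…,n-1}`. -/
def permDist {n : ℕ} (x y : Equiv.Perm (Fin n)) : ℕ :=
  (Finset.univ.filter fun i => x i ≠ y i).card

/-- Weight of a permutation: number of non-fixed points. -/
def permWt {n : ℕ} (x : Equiv.Perm (Fin n)) : ℕ :=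
  (Finset.univ.filter fun i => x i ≠ i).card

/-- `C` is an `(n,d)` permutation array. -/
def IsPA (n d : ℕ) (C : Finset (Equiv.Perm (Fin n))) : Prop :=
  ∀ x ∈ C, ∀ y ∈ C, x ≠ y → d ≤ permDist x y

/-- `P(n,d)`: the maximum size of an `(n,d)` permutation array. -/
noncomputable def Pmax (n d : ℕ) : ℕ :=
  sSup {m | ∃ C : Finset (Equiv.Perm (Fin n)), IsPA n d C ∧ C.card = m}

/-- `P[n,e]`: the maximum size of a subset of `S_n` with pairwise distances at most `e`. -/
noncomputable def PmaxLe (n e : ℕ) : ℕ :=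
  sSup {m | ∃ Γ : Finset (Equiv.Perm (Fin n)),
    (∀ x ∈ Γ, ∀ y ∈ Γ, x ≠ y → permDist x y ≤ e) ∧ Γ.card = m}

/-- `V(n,r) = Σ_{i=0}^{r} C(n,i)·D_i`. -/
def V (n r : ℕ) : ℕ := ∑ i ∈ Finset.range (r + 1), Nat.choose n i * numDerangements i

/-- `V₂(n,r) = Σ_{i=0}^{r} C(n,i)`. -/
def V2 (n r : ℕ) : ℕ := ∑ i ∈ Finset.range (r + 1), Nat.choose n i

/-- `L_{i,j}` (depending also on `n` and `d`). -/
def L (n d i j : ℕ) : ℕ :=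
  ∑ k ∈ Finset.Icc ((i + j + 1 - d + 1) / 2) (min i j),
    ∑ l ∈ Finset.range (min (d + 2 * k - i - j - 1) k + 1),
      Nat.choose i k * Nat.choose (n - i) (j - k) * Nat.choose k l *
        Nat.factorial (l + j - k)

/-- `T`: number of unordered pairs of distinct permutations in `S_n`, each of weight
between `1` and `d-1`, with Hamming distance at most `d-1`. -/
def Tperm (n d : ℕ) : ℕ :=
  ((Finset.univ : Finset (Equiv.Perm (Fin n) × Equiv.Perm (Fin n))).filter
    (fun p => p.1 ≠ p.2 ∧ 1 ≤ permWt p.1 ∧ permWt p.1 ≤ d - 1 ∧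
      1 ≤ permWt p.2 ∧ permWt p.2 ≤ d - 1 ∧ permDist p.1 p.2 ≤ d - 1)).card / 2

/-- Hamming weight of a binary vector. -/
def binWt {n : ℕ} (u : Fin n → Bool) : ℕ := (Finset.univ.filter fun i => u i ≠ false).card

/-- Hamming distance between binary vectors. -/
def binDist {n : ℕ} (u v : Fin n → Bool) : ℕ := (Finset.univ.filter fun i => u i ≠ v i).card

/-- `T′`: number of unordered pairs of distinct nonzero binary vectors of length `n`,
each of Hamming weight at most `d-1`, with Hamming distance at most `d-1`. -/
def Tbin (n d : ℕ) : ℕ :=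
  ((Finset.univ : Finset ((Fin n → Bool) × (Fin n → Bool))).filter
    (fun p => p.1 ≠ p.2 ∧ p.1 ≠ (fun _ => false) ∧ p.2 ≠ (fun _ => false) ∧
      binWt p.1 ≤ d - 1 ∧ binWt p.2 ≤ d - 1 ∧ binDist p.1 p.2 ≤ d - 1)).card / 2

/-!
Translate `Γ` so that it contains the identity; then every member has weight at most `d - 1`.
If `x₀ ∈ Γ` has maximal weight `w ≥ ⌊(d-1)/2⌋`, all of `Γ` lies among the permutations of
weight `≤ w` within distance `d - 1` of `x₀`; otherwise, by the triangle inequality, it lies in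
the analogous set around any permutation of weight `⌊(d-1)/2⌋`.

To count permutations `y` of weight `j` near `x` of weight `i`, write `S` for the support of `y`,
`K = S ∩ supp x`, `B = S \ supp x` and `A ⊆ K` for the points where `y` agrees with `x`. Then
`d(x, y) = (i - |K|) + (j - |A|)`, and `(K, B, A)` determines `y` up to a permutation of `S \ A`.
With `k = |K|` and `l = k - |A|` this is the summand `C(i,k) C(n-i,j-k) C(k,l) (l+j-k)!` of
`L_{i,j}`.
-/

open Equiv Finset
open scoped Nat

theorem card_biUnion_le_sum_of_le {ι β : Type*} [DecidableEq β] {s : Finset ι}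
    {t : ι → Finset β} {f : ι → ℕ} (h : ∀ i ∈ s, #(t i) ≤ f i) :
    #(s.biUnion t) ≤ ∑ i ∈ s, f i :=
  card_biUnion_le.trans (sum_le_sum h)

namespace Equiv.Perm

variable {α : Type*} [Fintype α] [DecidableEq α]

theorem card_le_factorial_of_eqOn_compl {F : Finset (Perm α)} {s : Finset α}
    (hF : ∀ σ ∈ F, ∀ τ ∈ F, ∀ a ∉ s, σ a = τ a) : #F ≤ (#s)! := by
  rcases F.eq_empty_or_nonempty with rfl | ⟨σ₀, hσ₀⟩
  · simp
  -- `σ ↦ σ₀⁻¹ * σ` maps `F` injectively into the permutations supported in `s`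
  have hmaps : ∀ σ ∈ F, σ₀⁻¹ * σ ∈ univ.image (ofSubtype : Perm s → Perm α) := by
    intro σ hσ
    obtain ⟨τ, hτ⟩ := (mem_range_ofSubtype_iff (p := (· ∈ s)) (g := σ₀⁻¹ * σ)).mpr fun a ha => by
      by_contra has
      exact mem_support.mp ha (by simp [← hF σ₀ hσ₀ σ hσ a has])
    exact mem_image.mpr ⟨τ, mem_univ _, hτ⟩
  calc #F ≤ #(univ.image (ofSubtype : Perm s → Perm α)) :=
        card_le_card_of_injOn _ hmaps (mul_right_injective σ₀⁻¹).injOn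
    _ = (#s)! := by
        rw [card_image_of_injective _ ofSubtype_injective, Finset.card_univ, Fintype.card_perm,
          Fintype.card_coe]

theorem card_le_factorial_of_support_eq {F : Finset (Perm α)} {x : Perm α} {S A : Finset α}
    (hF : ∀ y ∈ F, y.support = S ∧ ∀ a ∈ A, y a = x a) : #F ≤ (#(S \ A))! := by
  refine card_le_factorial_of_eqOn_compl fun σ hσ τ hτ a ha => ?_
  by_cases haA : a ∈ A
  · rw [(hF σ hσ).2 a haA, (hF τ hτ).2 a haA]
  · have haS : a ∉ S := fun h => ha (mem_sdiff.mpr ⟨h, haA⟩)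
    rw [notMem_support.mp ((hF σ hσ).1 ▸ haS), notMem_support.mp ((hF τ hτ).1 ▸ haS)]

theorem card_filter_ne_eq (σ τ : Perm α) :
    #{a | σ a ≠ τ a} = #(σ.support \ τ.support) + #{a ∈ τ.support | τ a ≠ σ a} := by
  rw [← card_filter_add_card_filter_not (fun a => a ∈ τ.support), filter_filter,
    filter_filter, add_comm]
  congr 2
  · ext a; simp only [mem_filter, mem_sdiff, mem_support, mem_univ, true_and]; grind
  · ext a; simp only [mem_filter, mem_support, mem_univ, true_and]; grind

theorem exists_card_support_eq {m : ℕ} (hm : 2 ≤ m) (hmα : m ≤ Fintype.card α) :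
    ∃ σ : Perm α, #σ.support = m := by
  obtain ⟨σ, hσ⟩ := (exists_with_cycleType_iff (α := α) (m := {m})).mpr
    ⟨by simpa, by simpa⟩
  exact ⟨σ, by rw [← sum_cycleType, hσ, Multiset.sum_singleton]⟩

end Equiv.Perm

variable {n : ℕ}

theorem permDist_mul_right (a b c : Perm (Fin n)) : permDist (a * c) (b * c) = permDist a b :=
  card_bij' (fun p _ => c p) (fun p _ => c.symm p)
    (fun p hp => by rw [mem_filter] at hp ⊢; simpa using hp)
    (fun p hp => by rw [mem_filter] at hp ⊢; simpa using hp)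
    (fun p _ => by simp) (fun p _ => by simp)

theorem permDist_le_permWt_add_permWt (x y : Perm (Fin n)) :
    permDist x y ≤ permWt x + permWt y := by
  refine (card_le_card fun p hp => ?_).trans (card_union_le _ _)
  simp only [mem_filter, mem_univ, true_and, mem_union] at hp ⊢
  by_contra! h
  exact hp (h.1.trans h.2.symm)

theorem permWt_eq_card_support (x : Perm (Fin n)) : permWt x = #x.support := rfl

theorem exists_fiber_of_permDist_le {d i j : ℕ} (hd : 0 < d) {x y : Perm (Fin n)}
    (hx : permWt x = i) (hy : permWt y = j) (hxy : permDist x y ≤ d - 1) :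
    ∃ k ∈ Icc ((i + j + 1 - d + 1) / 2) (min i j), ∃ l ∈ range (min (d + 2 * k - i - j - 1) k + 1),
      ∃ K ∈ x.support.powersetCard k, ∃ B ∈ x.supportᶜ.powersetCard (j - k),
        ∃ A ∈ K.powersetCard (k - l), y.support = K ∪ B ∧ ∀ a ∈ A, y a = x a := by
  rw [permWt_eq_card_support] at hx hy
  set M := x.support
  set S := y.support
  have hAK : {a ∈ S | y a = x a} ⊆ S ∩ M := fun a ha => by
    simp only [S, M, mem_filter, mem_inter, Perm.mem_support] at ha ⊢
    exact ⟨ha.1, ha.2 ▸ ha.1⟩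
  have hdist : permDist x y = #(M \ S) + #{a ∈ S | y a ≠ x a} := Perm.card_filter_ne_eq x y
  have hM := card_sdiff_add_card_inter M S
  have hS := card_sdiff_add_card_inter S M
  have hagree : #{a ∈ S | y a = x a} + #{a ∈ S | y a ≠ x a} = #S :=
    card_filter_add_card_filter_not _
  have hAle := card_le_card hAK
  rw [inter_comm] at hM
  refine ⟨#(S ∩ M), ?_, #(S ∩ M) - #{a ∈ S | y a = x a}, ?_, S ∩ M, ?_, S \ M, ?_,
    {a ∈ S | y a = x a}, ?_, ?_, fun a ha => ?_⟩
  · simp only [mem_Icc]; omega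
  · simp only [mem_range]; omega
  · exact mem_powersetCard.mpr ⟨inter_subset_right, rfl⟩
  · exact mem_powersetCard.mpr ⟨fun a ha => mem_compl.mpr (mem_sdiff.mp ha).2, by omega⟩
  · exact mem_powersetCard.mpr ⟨hAK, by omega⟩
  · rw [union_comm, sdiff_union_inter]
  · exact (mem_filter.mp ha).2

theorem card_filter_permWt_eq_permDist_le {d i : ℕ} (hd : 0 < d) {x : Perm (Fin n)}
    (hx : permWt x = i) (j : ℕ) :
    #{y : Perm (Fin n) | permWt y = j ∧ permDist x y ≤ d - 1} ≤ L n d i j := by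
  calc _ ≤ #((Icc ((i + j + 1 - d + 1) / 2) (min i j)).biUnion fun k =>
        (range (min (d + 2 * k - i - j - 1) k + 1)).biUnion fun l =>
          (x.support.powersetCard k).biUnion fun K =>
            (x.supportᶜ.powersetCard (j - k)).biUnion fun B =>
              (K.powersetCard (k - l)).biUnion fun A =>
                {y : Perm (Fin n) | y.support = K ∪ B ∧ ∀ a ∈ A, y a = x a}) := by
        refine card_le_card fun y hy => ?_
        simp only [mem_biUnion, mem_filter, mem_univ, true_and] at hy ⊢
        exact exists_fiber_of_permDist_le hd hx hy.1 hy.2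
    _ ≤ ∑ k ∈ Icc ((i + j + 1 - d + 1) / 2) (min i j),
          ∑ l ∈ range (min (d + 2 * k - i - j - 1) k + 1),
            ∑ K ∈ x.support.powersetCard k, ∑ B ∈ x.supportᶜ.powersetCard (j - k),
              ∑ _A ∈ K.powersetCard (k - l), (l + j - k)! := by
        refine card_biUnion_le_sum_of_le fun k hk => card_biUnion_le_sum_of_le fun l hl =>
          card_biUnion_le_sum_of_le fun K hK => card_biUnion_le_sum_of_le fun B hB =>
            card_biUnion_le_sum_of_le fun A hA =>
              (Perm.card_le_factorial_of_support_eq fun y hy => (mem_filter.mp hy).2).trans_eq ?_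
        rw [mem_Icc] at hk
        rw [mem_range] at hl
        rw [mem_powersetCard] at hK hB hA
        have hKB : Disjoint K B :=
          disjoint_of_subset_left hK.1 (subset_compl_iff_disjoint_left.mp hB.1)
        rw [card_sdiff_of_subset (hA.1.trans subset_union_left), card_union_of_disjoint hKB]
        congr 1
        omega
    _ = L n d i j := by
        have hcompl : #x.supportᶜ = n - i := by rw [card_compl, Fintype.card_fin, ← hx]; rfl
        refine sum_congr rfl fun k _ => sum_congr rfl fun l hl => ?_
        rw [sum_congr rfl fun K hK => by
          rw [sum_const, sum_const, card_powersetCard, card_powersetCard,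
            (mem_powersetCard.mp hK).2, hcompl]]
        rw [sum_const, card_powersetCard, ← permWt_eq_card_support, hx,
          Nat.choose_symm (by simp only [mem_range] at hl; omega)]
        simp only [smul_eq_mul]
        ring

def ballBound (n d i : ℕ) : ℕ :=
  ∑ j ∈ range (i + 1), if j = 0 then 1 else L n d i j

theorem eq_one_of_permWt_eq_zero {y : Perm (Fin n)} (hy : permWt y = 0) : y = 1 :=
  Perm.support_eq_empty_iff.mp (card_eq_zero.mp hy)

theorem card_filter_permWt_le_permDist_le {d i : ℕ} (hd : 0 < d) {x : Perm (Fin n)}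
    (hx : permWt x = i) :
    #{y : Perm (Fin n) | permWt y ≤ i ∧ permDist x y ≤ d - 1} ≤
      ballBound n d i := by
  calc _ ≤ #((range (i + 1)).biUnion fun j =>
        {y : Perm (Fin n) | permWt y = j ∧ permDist x y ≤ d - 1}) := by
        refine card_le_card fun y hy => ?_
        simp only [mem_biUnion, mem_filter, mem_univ, true_and, mem_range] at hy ⊢
        exact ⟨permWt y, Nat.lt_succ_of_le hy.1, rfl, hy.2⟩
    _ ≤ _ := card_biUnion_le_sum_of_le fun j _ => by
        split_ifs with hj
        · refine card_le_one.mpr fun a ha b hb => ?_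
          rw [eq_one_of_permWt_eq_zero ((mem_filter.mp ha).2.1.trans hj),
            eq_one_of_permWt_eq_zero ((mem_filter.mp hb).2.1.trans hj)]
        · exact card_filter_permWt_eq_permDist_le hd hx j

theorem exists_card_le_of_one_mem {d : ℕ} (hd : 0 < d) (hdn : d ≤ n)
    {Γ : Finset (Perm (Fin n))} (hΓ1 : 1 ∈ Γ)
    (hΓ : ∀ x ∈ Γ, ∀ y ∈ Γ, x ≠ y → permDist x y ≤ d - 1) :
    ∃ i ∈ Icc ((d - 1) / 2) (d - 1), #Γ ≤ ballBound n d i := by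
  have hdist : ∀ x ∈ Γ, ∀ y ∈ Γ, permDist x y ≤ d - 1 := fun x hx y hy => by
    rcases eq_or_ne x y with rfl | hxy
    · simp [permDist]
    · exact hΓ x hx y hy hxy
  obtain ⟨x₀, hx₀, hmax⟩ := exists_max_image Γ permWt ⟨1, hΓ1⟩
  have hwt : permWt x₀ ≤ d - 1 := hdist x₀ hx₀ 1 hΓ1
  by_cases hlarge : (d - 1) / 2 ≤ permWt x₀
  · refine ⟨permWt x₀, mem_Icc.mpr ⟨hlarge, hwt⟩, ?_⟩
    exact (card_le_card fun y hy => mem_filter.mpr ⟨mem_univ _, hmax y hy, hdist x₀ hx₀ y hy⟩).trans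
      (card_filter_permWt_le_permDist_le hd rfl)
  refine ⟨(d - 1) / 2, mem_Icc.mpr ⟨le_rfl, Nat.div_le_self _ _⟩, ?_⟩
  rcases Nat.eq_zero_or_pos (permWt x₀) with h0 | hpos
  · calc #Γ ≤ 1 := card_le_one.mpr fun a ha b hb => by
          rw [eq_one_of_permWt_eq_zero (Nat.le_zero.mp ((hmax a ha).trans_eq h0)),
            eq_one_of_permWt_eq_zero (Nat.le_zero.mp ((hmax b hb).trans_eq h0))]
      _ ≤ _ := by
          simpa [ballBound] using
            single_le_sum (f := fun j => if j = 0 then 1 else L n d ((d - 1) / 2) j)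
              (fun _ _ => Nat.zero_le _) (mem_range.mpr (Nat.succ_pos _))
  -- any `c` of weight `(d - 1) / 2` is within `(d - 1) / 2 + permWt x₀ ≤ d - 1` of all of `Γ`
  obtain ⟨c, hc⟩ := Perm.exists_card_support_eq (α := Fin n) (m := (d - 1) / 2) (by omega)
    (by rw [Fintype.card_fin]; omega)
  refine (card_le_card fun y hy => mem_filter.mpr ⟨mem_univ _, ?_, ?_⟩).trans
    (card_filter_permWt_le_permDist_le hd hc)
  · exact (hmax y hy).trans (Nat.le_of_not_le hlarge)
  · have := hmax y hy
    exact (permDist_le_permWt_add_permWt c y).trans (by rw [permWt_eq_card_support, hc]; omega)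

theorem stmt16_general (n d : ℕ) (hd : 0 < d) (hdn : d ≤ n) :
    PmaxLe n (d - 1) ≤
      (Finset.Icc ((d - 1) / 2) (d - 1)).sup
        (fun i => ∑ j ∈ Finset.range (i + 1), if j = 0 then 1 else L n d i j) := by
  refine csSup_le ⟨0, ∅, by simp, rfl⟩ ?_
  rintro _ ⟨Γ, hΓ, rfl⟩
  rcases Γ.eq_empty_or_nonempty with rfl | ⟨z, hz⟩
  · simp
  have hΓz : ∀ x ∈ Γ.image (· * z⁻¹), ∀ y ∈ Γ.image (· * z⁻¹), x ≠ y → permDist x y ≤ d - 1 := by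
    intro x hx y hy hxy
    obtain ⟨a, ha, rfl⟩ := mem_image.mp hx
    obtain ⟨b, hb, rfl⟩ := mem_image.mp hy
    exact (permDist_mul_right a b z⁻¹).trans_le (hΓ a ha b hb fun h => hxy (h ▸ rfl))
  obtain ⟨i, hi, hle⟩ := exists_card_le_of_one_mem hd hdn
    (mem_image.mpr ⟨z, hz, mul_inv_cancel z⟩) hΓz
  rw [card_image_of_injective _ (mul_left_injective z⁻¹)] at hle
  exact hle.trans (le_sup (f := ballBound n d) hi)

theorem stmt16 (n d : ℕ) (hn : 0 < n) (hd : 0 < d) (hdn : d ≤ n) :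
    PmaxLe n (d - 1) ≤
      (Finset.Icc ((d - 1) / 2) (d - 1)).sup
        (fun i => ∑ j ∈ Finset.range (i + 1), if j = 0 then 1 else L n d i j) :=
  stmt16_general n d hd hdn
end

section
/- Let n and d be positive integers with n ≥ d > 3. Then P(n−1, d−3) ≥ P(n,d). -/
open Finset

/-! Cutting the point `0` out of the cycle of `x ∈ S_{m+1}`, i.e. passing to `swap (x 0) 0 * x`,
gives a permutation that fixes `0` and agrees with `x` off `{0, x⁻¹ 0}`. Restricted to the
remaining `m` points, it keeps every disagreement of `x` and `y` except possibly those at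
`0`, `x⁻¹ 0`, `y⁻¹ 0`, so distances drop by at most `3`. As `d > 3`, this map is injective on
an `(m+1, d)` array and sends it to an `(m, d-3)` array. -/

open Equiv Equiv.Perm

lemma permDist_self {n : ℕ} (x : Perm (Fin n)) : permDist x x = 0 := by
  simp [permDist]

lemma bddAbove_card_isPA (n d : ℕ) :
    BddAbove {k | ∃ C : Finset (Perm (Fin n)), IsPA n d C ∧ C.card = k} :=
  bddAbove_def.2 ⟨Fintype.card (Perm (Fin n)), by rintro _ ⟨C, -, rfl⟩; exact C.card_le_univ⟩

lemma card_le_Pmax {n d : ℕ} {C : Finset (Perm (Fin n))} (hC : IsPA n d C) :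
    C.card ≤ Pmax n d :=
  le_csSup (bddAbove_card_isPA n d) ⟨C, hC, rfl⟩

lemma exists_isPA_card_eq_Pmax (n d : ℕ) :
    ∃ C : Finset (Perm (Fin n)), IsPA n d C ∧ C.card = Pmax n d :=
  Nat.sSup_mem (by exact ⟨0, ∅, by simp [IsPA], rfl⟩) (bddAbove_card_isPA n d)

lemma Pmax_le_of_permDist_le_add {n m d k : ℕ} (hkd : k < d) (f : Perm (Fin n) → Perm (Fin m))
    (hf : ∀ x y, permDist x y ≤ permDist (f x) (f y) + k) : Pmax n d ≤ Pmax m (d - k) := by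
  obtain ⟨C, hC, hcard⟩ := exists_isPA_card_eq_Pmax n d
  have hinj : Set.InjOn f C := fun x hx y hy hxy => by
    by_contra hne
    have := hf x y
    rw [hxy, permDist_self] at this
    have := hC x hx y hy hne
    omega
  have hPA : IsPA m (d - k) (C.image f) := by
    intro a ha b hb hab
    obtain ⟨x, hx, rfl⟩ := mem_image.1 ha
    obtain ⟨y, hy, rfl⟩ := mem_image.1 hb
    have := hf x y
    have := hC x hx y hy (by rintro rfl; exact hab rfl)
    omega
  calc Pmax n d = (C.image f).card := by rw [card_image_of_injOn hinj, hcard]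
    _ ≤ Pmax m (d - k) := card_le_Pmax hPA

namespace Equiv.Perm

variable {m : ℕ}

def fixZero (x : Perm (Fin (m + 1))) : Perm (Fin (m + 1)) := swap (x 0) 0 * x

lemma fixZero_apply_zero (x : Perm (Fin (m + 1))) : fixZero x 0 = 0 := by
  simp [fixZero]

lemma fixZero_apply_of_ne {x : Perm (Fin (m + 1))} {i : Fin (m + 1)} (hi : i ≠ 0)
    (hxi : x i ≠ 0) : fixZero x i = x i :=
  swap_apply_of_ne_of_ne (fun h => hi (x.injective h)) hxi

lemma permDist_le_permDist_fixZero_add_three (x y : Perm (Fin (m + 1))) :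
    permDist x y ≤ permDist (fixZero x) (fixZero y) + 3 := by
  have hsub : univ.filter (fun i => x i ≠ y i) ⊆
      univ.filter (fun i => fixZero x i ≠ fixZero y i) ∪ {0, x⁻¹ 0, y⁻¹ 0} := by
    intro i
    simp only [mem_filter, mem_univ, true_and, mem_union, mem_insert, mem_singleton]
    intro hxy
    by_cases h : i = 0 ∨ x i = 0 ∨ y i = 0
    · right
      rcases h with h | h | h
      · exact .inl h
      · exact .inr (.inl (by rw [← h]; simp))
      · exact .inr (.inr (by rw [← h]; simp))
    · push Not at h
      left
      rwa [fixZero_apply_of_ne h.1 h.2.1, fixZero_apply_of_ne h.1 h.2.2]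
  calc permDist x y ≤ permDist (fixZero x) (fixZero y) + #({0, x⁻¹ 0, y⁻¹ 0} : Finset _) :=
        (card_le_card hsub).trans (card_union_le _ _)
    _ ≤ permDist (fixZero x) (fixZero y) + 3 := by grw [card_le_three]

lemma decomposeFin_fst (x : Perm (Fin (m + 1))) : (decomposeFin x).1 = x 0 := by
  simpa using (decomposeFin_symm_apply_zero (decomposeFin x).1 (decomposeFin x).2).symm

def deleteZero (x : Perm (Fin (m + 1))) : Perm (Fin m) := (decomposeFin (fixZero x)).2

lemma decomposeFin_symm_deleteZero (x : Perm (Fin (m + 1))) :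
    decomposeFin.symm (0, deleteZero x) = fixZero x :=
  decomposeFin.symm_apply_eq.2 <|
    Prod.ext (by rw [decomposeFin_fst, fixZero_apply_zero]) rfl

lemma permDist_decomposeFin_symm_zero (σ τ : Perm (Fin m)) :
    permDist (decomposeFin.symm (0, σ)) (decomposeFin.symm (0, τ)) = permDist σ τ := by
  simp [permDist, card_filter, Fin.sum_univ_succ, decomposeFin_symm_apply_succ]

lemma permDist_le_permDist_deleteZero_add_three (x y : Perm (Fin (m + 1))) :
    permDist x y ≤ permDist (deleteZero x) (deleteZero y) + 3 := by
  rw [← permDist_decomposeFin_symm_zero (deleteZero x), decomposeFin_symm_deleteZero,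
    decomposeFin_symm_deleteZero]
  exact permDist_le_permDist_fixZero_add_three x y

end Equiv.Perm

theorem stmt17 (n d : ℕ) (hd : 3 < d) (hdn : d ≤ n) :
    Pmax (n - 1) (d - 3) ≥ Pmax n d := by
  obtain ⟨m, rfl⟩ : ∃ m, n = m + 1 := ⟨n - 1, by omega⟩
  exact Pmax_le_of_permDist_le_add hd deleteZero permDist_le_permDist_deleteZero_add_three
end
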